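/- Normalize the measure of 𝕋 to total mass 1 and let U ∈ C^∞(𝕋, ℂ^{d×d}) be Hermitian-valued. Then for every integer k ≥ 0, 𝓔_k(U) = tr(𝓜_k(U)), where 𝓔_k(U) = ⟨L_U^k(Π_{≥0}U) | Π_{≥0}U⟩ and 𝓜_k(U) = ∫_𝕋 L_U^{k+2}(𝟏) dx, with 𝟏 the identity matrix viewed as a constant function in ℋ. -/

import Mathlib

open MeasureTheory Complex Matrix
open scoped Real

noncomputable section

instance : Fact (0 < 2 * Real.pi) := ⟨by positivity⟩

/-- The torus `ℝ / 2πℤ`. -/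
abbrev Torus := AddCircle (2 * Real.pi)

/-- `d × d` complex matrices. -/
abbrev Mat (d : ℕ) := Matrix (Fin d) (Fin d) ℂ

/-- Normalized Haar measure (total mass 1) on the torus. -/
abbrev μT : Measure Torus := AddCircle.haarAddCircle

variable {d : ℕ}

/-- Entrywise `n`-th Fourier coefficient of a matrix-valued function on the torus. -/
def mcoeff (f : Torus → Mat d) (n : ℤ) : Mat d :=
  Matrix.of fun i j => fourierCoeff (fun x => f x i j) n

/-- `f ∈ L²(𝕋, ℂ^{d×d})`. -/
def InL2 (f : Torus → Mat d) : Prop :=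
  ∀ i j, MemLp (fun x => f x i j) 2 μT

/-- `f ∈ L^∞(𝕋, ℂ^{d×d})`. -/
def InLinf (f : Torus → Mat d) : Prop :=
  ∀ i j, MemLp (fun x => f x i j) ⊤ μT

/-- `f` belongs to the Sobolev space `H^k(𝕋, ℂ^{d×d})` (Fourier characterization). -/
def InHk (k : ℕ) (f : Torus → Mat d) : Prop :=
  InL2 f ∧ ∀ i j, Summable fun n : ℤ =>
    (n : ℝ) ^ (2 * k) * ‖fourierCoeff (fun x => f x i j) n‖ ^ 2

/-- `f` belongs to the Hardy space `ℋ = L²₊(𝕋, ℂ^{d×d})`: it is `L²` and all its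
negatively indexed Fourier coefficients vanish. -/
def IsHardy (f : Torus → Mat d) : Prop :=
  InL2 f ∧ ∀ n : ℤ, n < 0 → mcoeff f n = 0

/-- `g = Π_{≥0} f`, the Szegő projection of `f` onto the Hardy space. -/
def ProjPosOf (f g : Torus → Mat d) : Prop :=
  InL2 g ∧ ∀ n : ℤ, mcoeff g n = if 0 ≤ n then mcoeff f n else 0

/-- `g = Π_{<0} f = (Id - Π_{≥0}) f`. -/
def ProjNegOf (f g : Torus → Mat d) : Prop :=
  InL2 g ∧ ∀ n : ℤ, mcoeff g n = if n < 0 then mcoeff f n else 0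

/-- `g = ∂ₓ f`. -/
def DerivXOf (f g : Torus → Mat d) : Prop :=
  InL2 g ∧ ∀ n : ℤ, mcoeff g n = (Complex.I * (n : ℂ)) • mcoeff f n

/-- `g = D f` where `D = (1/i) ∂ₓ`. -/
def DOf (f g : Torus → Mat d) : Prop :=
  InL2 g ∧ ∀ n : ℤ, mcoeff g n = (n : ℂ) • mcoeff f n

/-- `g = |D| f`, the Fourier multiplier with symbol `|n|`. -/
def AbsDOf (f g : Torus → Mat d) : Prop :=
  InL2 g ∧ ∀ n : ℤ, mcoeff g n = ((|n| : ℤ) : ℂ) • mcoeff f n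

/-- `g = H f`, the Hilbert transform `H = i · sign(D)` (so that `H ∂ₓ = -|D|`). -/
def HilbertOf (f g : Torus → Mat d) : Prop :=
  InL2 g ∧ ∀ n : ℤ, mcoeff g n = (Complex.I * ((n.sign : ℤ) : ℂ)) • mcoeff f n

/-- `g = T_u f = Π_{≥0}(u f)`, the Toeplitz operator of symbol `u` applied to `f`. -/
def ToeplitzOf (u f g : Torus → Mat d) : Prop :=
  ProjPosOf (fun x => u x * f x) g

/-- `g = L_u f = D f - T_u f`, the Lax operator applied to `f`. -/
def LaxOf (u f g : Torus → Mat d) : Prop :=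
  ∃ df tf, DOf f df ∧ ToeplitzOf u f tf ∧ ∀ᵐ x ∂μT, g x = df x - tf x

/-- `g = L_u^n f`, iterates of the Lax operator. -/
def LaxIterOf (u : Torus → Mat d) : ℕ → (Torus → Mat d) → (Torus → Mat d) → Prop
  | 0, f, g => ∀ᵐ x ∂μT, g x = f x
  | n + 1, f, g => ∃ h, LaxIterOf u n f h ∧ LaxOf u h g

/-- `g = B_u f = i (T_{|D|u} - T_u²) f`. -/
def BOf (u f g : Torus → Mat d) : Prop :=
  ∃ w t1 t2 t3, AbsDOf u w ∧ ToeplitzOf w f t1 ∧ ToeplitzOf u f t2 ∧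
    ToeplitzOf u t2 t3 ∧ ∀ᵐ x ∂μT, g x = Complex.I • (t1 x - t3 x)

/-- The inner product `⟨f|g⟩ = ∫ tr (f g*)` on `L²(𝕋, ℂ^{d×d})`. -/
def hinner (f g : Torus → Mat d) : ℂ :=
  ∫ x, (f x * (g x)ᴴ).trace ∂μT

/-- The mean value `⟨f⟩` of a matrix-valued function on the torus (whose measure is
normalized to total mass 1). -/
def mint (f : Torus → Mat d) : Mat d :=
  Matrix.of fun i j => ∫ x, f x i j ∂μT

/-- Squared (Frobenius) norm of a matrix. -/
def matNormSq (M : Mat d) : ℝ := ∑ i, ∑ j, ‖M i j‖ ^ 2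

/-- Squared Sobolev `H^k` norm, via Fourier coefficients (for `k = 0` this is the
squared `L²` norm, by Parseval). -/
def sobNormSq (k : ℕ) (f : Torus → Mat d) : ℝ :=
  ∑' n : ℤ, (1 + (n : ℝ) ^ 2) ^ k * matNormSq (mcoeff f n)

/-- `f` takes Hermitian values (a.e.). -/
def IsHermitianValued (f : Torus → Mat d) : Prop :=
  ∀ᵐ x ∂μT, (f x)ᴴ = f x

/-- `t ↦ U t` is continuous from `I` into `H^k(𝕋, ℂ^{d×d})`. -/
def ContInHk (k : ℕ) (I : Set ℝ) (U : ℝ → Torus → Mat d) : Prop :=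
  ∀ t ∈ I, ∀ ε > 0, ∃ δ > 0, ∀ s ∈ I, |s - t| < δ →
    sobNormSq k (fun x => U s x - U t x) < ε

/-- `V = ∂ₜ U` on `I`, in the sense of differentiability in `L²(𝕋, ℂ^{d×d})`. -/
def HasL2DerivOn (I : Set ℝ) (U V : ℝ → Torus → Mat d) : Prop :=
  ∀ t ∈ I, ∀ ε > 0, ∃ δ > 0, ∀ s ∈ I, |s - t| < δ →
    sobNormSq 0 (fun x => U s x - U t x - (s - t) • V t x) ≤ ε * (s - t) ^ 2

/-- `U`, with time derivative `∂ₜ U = V`, solves the spin Benjamin–Ono equation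
`∂ₜ U = ∂ₓ (|D|U - U²) - i [U, |D|U]` on the time interval `I`. -/
def SolvesSBO (I : Set ℝ) (U V : ℝ → Torus → Mat d) : Prop :=
  ∀ t ∈ I, ∀ w g : Torus → Mat d, AbsDOf (U t) w →
    DerivXOf (fun x => w x - U t x * U t x) g →
    ∀ᵐ x ∂μT, V t x = g x - Complex.I • (U t x * w x - w x * U t x)

/-! Since `D` kills constants, `L_U 𝟏 = -Π_{≥0} U`, and by linearity
`L_U^{k+2} 𝟏 = -L_U g` with `g = L_U^k (Π_{≥0} U)`. Taking the mean kills `D g` and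
`Π_{≥0}` does not touch the zeroth mode, so `tr 𝓜_k(U) = ∫ tr (U g)`. On the other side
`g` lies in the Hardy space, hence is orthogonal to `U - Π_{≥0} U`, and
`⟨g | Π_{≥0} U⟩ = ⟨g | U⟩ = ∫ tr (g U) = ∫ tr (U g)` for Hermitian-valued `U`. -/

open scoped ComplexConjugate

section Scalar

variable {T : ℝ} [Fact (0 < T)]

lemma fourierCoeff_zero_eq_integral {E : Type*} [NormedAddCommGroup E] [NormedSpace ℂ E]
    (f : AddCircle T → E) : fourierCoeff f 0 = ∫ t, f t ∂AddCircle.haarAddCircle := by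
  simp [fourierCoeff]

lemma fourierCoeff_const (c : ℂ) :
    fourierCoeff (fun _ : AddCircle T => c) = Pi.single 0 c := by
  have h : (fun _ : AddCircle T => c) = c • ⇑(fourier 0 : C(AddCircle T, ℂ)) := by
    ext t; simp
  ext n
  rw [h, fourierCoeff.const_smul, fourierCoeff_fourier]
  by_cases hn : n = 0 <;> simp [hn]

lemma fourierCoeff.neg {E : Type*} [NormedAddCommGroup E] [NormedSpace ℂ E]
    (f : AddCircle T → E) : fourierCoeff (-f) = -fourierCoeff f := by
  ext n
  simpa [fourierCoeff] using integral_neg (fun t => fourier (-n) t • f t)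

lemma fourierCoeff.sub {E : Type*} [NormedAddCommGroup E] [NormedSpace ℂ E]
    {f g : AddCircle T → E} (hf : Integrable f AddCircle.haarAddCircle)
    (hg : Integrable g AddCircle.haarAddCircle) :
    fourierCoeff (f - g) = fourierCoeff f - fourierCoeff g := by
  ext n
  simpa [fourierCoeff, smul_sub, -fourier_apply] using
    integral_sub (hf.fourier_smul (-n)) (hg.fourier_smul (-n))

lemma ae_eq_of_fourierCoeff_eq {a b : AddCircle T → ℂ}
    (ha : MemLp a 2 AddCircle.haarAddCircle) (hb : MemLp b 2 AddCircle.haarAddCircle)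
    (h : fourierCoeff a = fourierCoeff b) :
    a =ᵐ[AddCircle.haarAddCircle] b := by
  have hLp : ha.toLp a = hb.toLp b := fourierBasis.repr.injective <| by
    ext n
    rw [fourierBasis_repr, fourierBasis_repr, fourierCoeff_congr_ae ha.coeFn_toLp,
      fourierCoeff_congr_ae hb.coeFn_toLp, h]
  exact ha.coeFn_toLp.symm.trans (by rw [hLp]; exact hb.coeFn_toLp)

lemma hasSum_fourierCoeff_mul_conj {a b : AddCircle T → ℂ}
    (ha : MemLp a 2 AddCircle.haarAddCircle) (hb : MemLp b 2 AddCircle.haarAddCircle) :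
    HasSum (fun n => fourierCoeff a n * conj (fourierCoeff b n))
      (∫ t, a t * conj (b t) ∂AddCircle.haarAddCircle) := by
  have hinner :
      inner ℂ (hb.toLp b) (ha.toLp a) = ∫ t, a t * conj (b t) ∂AddCircle.haarAddCircle := by
    rw [L2.inner_def]
    refine integral_congr_ae ?_
    filter_upwards [ha.coeFn_toLp, hb.coeFn_toLp] with t hat hbt
    rw [RCLike.inner_apply, hat, hbt, mul_comm]
  have hterm : ∀ n,
      inner ℂ (hb.toLp b) (fourierBasis n) * inner ℂ (fourierBasis n) (ha.toLp a)
        = fourierCoeff a n * conj (fourierCoeff b n) := fun n => by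
    rw [← inner_conj_symm, ← HilbertBasis.repr_apply_apply, ← HilbertBasis.repr_apply_apply,
      fourierBasis_repr, fourierBasis_repr, fourierCoeff_congr_ae ha.coeFn_toLp,
      fourierCoeff_congr_ae hb.coeFn_toLp, mul_comm]
  simpa only [hterm, hinner] using fourierBasis.hasSum_inner_mul_inner (hb.toLp b) (ha.toLp a)

end Scalar

section MatrixValued

variable {d : ℕ}

lemma mcoeff_congr_ae {f g : Torus → Mat d} (h : f =ᵐ[μT] g) : mcoeff f = mcoeff g := by
  ext n i j
  exact congrFun (fourierCoeff_congr_ae (h.mono fun x hx => by rw [hx])) n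

lemma mcoeff_neg (f : Torus → Mat d) : mcoeff (-f) = -mcoeff f := by
  ext n i j
  exact congrFun (fourierCoeff.neg fun x => f x i j) n

lemma mcoeff_const (A : Mat d) (n : ℤ) : mcoeff (fun _ => A) n = if n = 0 then A else 0 := by
  ext i j
  by_cases hn : n = 0 <;> simp [mcoeff, fourierCoeff_const, hn]

lemma mint_eq_mcoeff_zero (f : Torus → Mat d) : mint f = mcoeff f 0 := by
  ext i j
  exact (fourierCoeff_zero_eq_integral _).symm

lemma InL2.integrable {f : Torus → Mat d} (hf : InL2 f) (i j : Fin d) :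
    Integrable (fun x => f x i j) μT :=
  (hf i j).integrable one_le_two

lemma InL2.neg {f : Torus → Mat d} (hf : InL2 f) : InL2 (-f) :=
  fun i j => (hf i j).neg

lemma InL2.congr_ae {f g : Torus → Mat d} (hf : InL2 f) (h : f =ᵐ[μT] g) : InL2 g :=
  fun i j => (hf i j).ae_eq (h.mono fun x hx => by rw [hx])

lemma InL2.sub {f g : Torus → Mat d} (hf : InL2 f) (hg : InL2 g) : InL2 fun x => f x - g x :=
  fun i j => (hf i j).sub (hg i j)

lemma mcoeff_sub {f g : Torus → Mat d} (hf : InL2 f) (hg : InL2 g) :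
    mcoeff (fun x => f x - g x) = mcoeff f - mcoeff g := by
  ext n i j
  exact congrFun (fourierCoeff.sub (hf.integrable i j) (hg.integrable i j)) n

lemma InL2.ae_eq_of_mcoeff_eq {f g : Torus → Mat d} (hf : InL2 f) (hg : InL2 g)
    (h : mcoeff f = mcoeff g) : f =ᵐ[μT] g := by
  have hentry : ∀ i j, ∀ᵐ x ∂μT, f x i j = g x i j := fun i j =>
    ae_eq_of_fourierCoeff_eq (hf i j) (hg i j)
      (funext fun n => congrFun (congrFun (congrFun h n) i) j)
  filter_upwards [ae_all_iff.2 fun i => ae_all_iff.2 (hentry i)] with x hx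
  exact Matrix.ext hx

lemma InL2.integrable_mul_apply {f g : Torus → Mat d} (hf : InL2 f) (hg : InL2 g)
    (i j : Fin d) :
    Integrable (fun x => (f x * g x) i j) μT := by
  simp only [Matrix.mul_apply]
  exact integrable_finsetSum _ fun k _ => (hf i k).integrable_mul (hg k j)

lemma trace_mint {f : Torus → Mat d} (hf : ∀ i, Integrable (fun x => f x i i) μT) :
    (mint f).trace = ∫ x, (f x).trace ∂μT := by
  simp only [Matrix.trace, Matrix.diag, mint, Matrix.of_apply]
  exact (integral_finsetSum _ fun i _ => hf i).symm

lemma hasSum_hinner {f g : Torus → Mat d} (hf : InL2 f) (hg : InL2 g) :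
    HasSum (fun n => (mcoeff f n * (mcoeff g n)ᴴ).trace) (hinner f g) := by
  have hint : ∀ i j, Integrable (fun x => f x i j * conj (g x i j)) μT :=
    fun i j => (hf i j).integrable_mul (hg i j).star
  have hsum : hinner f g = ∑ i, ∑ j, ∫ x, f x i j * conj (g x i j) ∂μT := by
    simp only [hinner, Matrix.trace, Matrix.diag, Matrix.mul_apply, Matrix.conjTranspose_apply,
      RCLike.star_def]
    rw [integral_finsetSum _ fun i _ => integrable_finsetSum _ fun j _ => hint i j]
    exact Finset.sum_congr rfl fun i _ => integral_finsetSum _ fun j _ => hint i j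
  simp only [hsum, Matrix.trace, Matrix.diag, Matrix.mul_apply, Matrix.conjTranspose_apply,
    RCLike.star_def, mcoeff, Matrix.of_apply]
  exact hasSum_sum fun i _ => hasSum_sum fun j _ => hasSum_fourierCoeff_mul_conj (hf i j) (hg i j)

end MatrixValued

section Lax

variable {d : ℕ} {u f g up : Torus → Mat d}

lemma ProjPosOf.isHardy (h : ProjPosOf f g) : IsHardy g :=
  ⟨h.1, fun n hn => by rw [h.2 n, if_neg (not_le.2 hn)]⟩

lemma IsHardy.congr_ae (hf : IsHardy f) (h : f =ᵐ[μT] g) : IsHardy g :=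
  ⟨hf.1.congr_ae h, by rw [← mcoeff_congr_ae h]; exact hf.2⟩

lemma IsHardy.hinner_of_projPosOf (hg : IsHardy g) (hf : InL2 f) (hp : ProjPosOf f up) :
    hinner g up = hinner g f := by
  have hterm : (fun n => (mcoeff g n * (mcoeff up n)ᴴ).trace)
      = fun n => (mcoeff g n * (mcoeff f n)ᴴ).trace := by
    funext n
    rw [hp.2 n]
    split_ifs with hn
    · rfl
    · rw [hg.2 n (not_le.1 hn)]; simp
  have hsum := hasSum_hinner hg.1 hp.1
  rw [hterm] at hsum
  exact hsum.unique (hasSum_hinner hg.1 hf)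

lemma IsHermitianValued.hinner_eq_integral_trace_mul (hu : IsHermitianValued u)
    (g : Torus → Mat d) : hinner g u = ∫ x, (u x * g x).trace ∂μT :=
  integral_congr_ae (hu.mono fun x hx => by simp only [hx, Matrix.trace_mul_comm (g x)])

lemma LaxOf.inL2 (h : LaxOf u f g) : InL2 g := by
  obtain ⟨df, tf, hdf, htf, hg⟩ := h
  exact (hdf.1.sub htf.1).congr_ae (hg.mono fun x hx => hx.symm)

lemma LaxOf.mcoeff_eq (h : LaxOf u f g) (n : ℤ) :
    mcoeff g n =
      (n : ℂ) • mcoeff f n - if 0 ≤ n then mcoeff (fun x => u x * f x) n else 0 := by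
  obtain ⟨df, tf, hdf, htf, hg⟩ := h
  rw [mcoeff_congr_ae hg, mcoeff_sub hdf.1 htf.1, Pi.sub_apply, hdf.2, htf.2]

lemma LaxOf.isHardy (hf : IsHardy f) (h : LaxOf u f g) : IsHardy g :=
  ⟨h.inL2, fun n hn => by rw [h.mcoeff_eq, hf.2 n hn, if_neg (not_le.2 hn)]; simp⟩

lemma LaxIterOf.isHardy (hf : IsHardy f) : ∀ {n : ℕ} {g : Torus → Mat d},
    LaxIterOf u n f g → IsHardy g
  | 0, _, h => hf.congr_ae (h.mono fun _ hx => hx.symm)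
  | _ + 1, _, ⟨_, hiter, hlax⟩ => hlax.isHardy (hiter.isHardy hf)

lemma LaxOf.ae_eq_neg {f₁ f₂ g₁ g₂ : Torus → Mat d} (hf : f₁ =ᵐ[μT] -f₂)
    (h₁ : LaxOf u f₁ g₁) (h₂ : LaxOf u f₂ g₂) : g₁ =ᵐ[μT] -g₂ := by
  have hprod : mcoeff (fun x => u x * f₁ x) = -mcoeff (fun x => u x * f₂ x) := by
    rw [← mcoeff_neg]
    exact mcoeff_congr_ae (hf.mono fun x hx => by simp [hx])
  refine h₁.inL2.ae_eq_of_mcoeff_eq h₂.inL2.neg (funext fun n => ?_)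
  rw [mcoeff_neg, Pi.neg_apply, h₁.mcoeff_eq, h₂.mcoeff_eq, mcoeff_congr_ae hf, mcoeff_neg,
    hprod]
  split_ifs <;> simp [sub_eq_add_neg, add_comm]

lemma LaxOf.ae_eq_neg_of_ae_eq_one (hup : ProjPosOf u up) (hf : f =ᵐ[μT] fun _ => 1)
    (h : LaxOf u f g) : g =ᵐ[μT] -up := by
  refine h.inL2.ae_eq_of_mcoeff_eq hup.1.neg (funext fun n => ?_)
  have hprod : mcoeff (fun x => u x * f x) = mcoeff u :=
    mcoeff_congr_ae (hf.mono fun x hx => by simp [hx])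
  rw [h.mcoeff_eq, mcoeff_congr_ae hf, mcoeff_const, hprod, mcoeff_neg, Pi.neg_apply, hup.2]
  split_ifs <;> simp_all

lemma LaxIterOf.ae_eq_neg_of_one (hup : ProjPosOf u up) : ∀ {n : ℕ} {h g : Torus → Mat d},
    LaxIterOf u (n + 1) (fun _ => 1) h → LaxIterOf u n up g → h =ᵐ[μT] -g
  | 0, _, _, ⟨_, hone, hlax⟩, hg =>
    (hlax.ae_eq_neg_of_ae_eq_one hup hone).trans (Filter.EventuallyEq.neg hg).symm
  | _ + 1, _, _, ⟨_, hh, hlaxh⟩, ⟨_, hg, hlaxg⟩ =>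
    LaxOf.ae_eq_neg (ae_eq_neg_of_one hup hh hg) hlaxh hlaxg

lemma LaxOf.mint_eq (h : LaxOf u f g) : mint g = -mcoeff (fun x => u x * f x) 0 := by
  rw [mint_eq_mcoeff_zero, h.mcoeff_eq]
  simp

end Lax

theorem Ek_eq_trace_Mk_general {d : ℕ}
    (U : Torus → Mat d) (hsmooth : ∀ m : ℕ, InHk m U) (hH : IsHermitianValued U) :
    ∀ k : ℕ, ∀ up g mk : Torus → Mat d,
      ProjPosOf U up → LaxIterOf U k up g →
      LaxIterOf U (k + 2) (fun _ => (1 : Mat d)) mk →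
      hinner g up = (mint mk).trace := by
  intro k up g mk hup hg hmk
  obtain ⟨h, hh, hlax⟩ := hmk
  have hU : InL2 U := (hsmooth 0).1
  have hgHardy : IsHardy g := hg.isHardy hup.isHardy
  have hprod : mcoeff (fun x => U x * h x) = -mcoeff (fun x => U x * g x) := by
    rw [← mcoeff_neg]
    exact mcoeff_congr_ae ((hh.ae_eq_neg_of_one hup hg).mono fun x hx => by simp [hx])
  calc hinner g up = hinner g U := hgHardy.hinner_of_projPosOf hU hup
    _ = ∫ x, (U x * g x).trace ∂μT := hH.hinner_eq_integral_trace_mul g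
    _ = (mint fun x => U x * g x).trace :=
      (trace_mint fun i => hU.integrable_mul_apply hgHardy.1 i i).symm
    _ = (mint mk).trace := by rw [hlax.mint_eq, hprod, mint_eq_mcoeff_zero, Pi.neg_apply, neg_neg]

/-- With the measure of `𝕋` normalized to total mass 1, for every Hermitian-valued
`U ∈ C^∞(𝕋, ℂ^{d×d})` (smoothness expressed by membership in every Sobolev space) and
every `k ≥ 0`, `𝓔_k(U) = tr 𝓜_k(U)`, where `𝓔_k(U) = ⟨L_U^k(Π_{≥0}U) | Π_{≥0}U⟩` and
`𝓜_k(U) = ∫ L_U^{k+2}(𝟏)`. -/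
theorem Ek_eq_trace_Mk {d : ℕ} (hd : 1 ≤ d)
    (U : Torus → Mat d) (hsmooth : ∀ m : ℕ, InHk m U) (hH : IsHermitianValued U) :
    ∀ k : ℕ, ∀ up g mk : Torus → Mat d,
      ProjPosOf U up → LaxIterOf U k up g →
      LaxIterOf U (k + 2) (fun _ => (1 : Mat d)) mk →
      hinner g up = (mint mk).trace :=
  Ek_eq_trace_Mk_general U hsmooth hH
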